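/- Let p be a prime and let G = A ⋊ C₂ be the semidirect product of the Prüfer p-group A = C_{p^∞} by the cyclic group C₂ = ⟨d⟩ of order 2, where d acts on A by inversion (a^d = a⁻¹ for all a ∈ A). Then every tensor x ∈ T⊗(G) satisfies |x^{ν(G)}| ≤ 4, i.e. every tensor has at most 4 conjugates in ν(G). -/

import Mathlib

/-!
Conjugation of tensors in `ν(G)` factors through the projection `ν(G) → G` identifying `g`
and `g^φ`: an element `x` acts on `[a, b^φ]` as its image `g` does, giving `[a^g, (b^g)^φ]`.
Hence a tensor has at most `|G : H|` conjugates for any subgroup `H` of `G` fixing it.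

For `G = A ⋊ C₂` we take `H = A`, of index `2`. Tensors are multiplicative in each argument on
commuting elements, and `A` is a divisible `p`-torsion group, so `[A, A^φ] = 1`; this makes `A`
fix the mixed tensors `[u, b^φ]` and `[a, u^φ]`, `u ∈ A`. If `b` is a reflection, every `c ∈ A`
is a commutator `[k, b]` (as `A` is `2`-divisible), so conjugation by `c` acts on tensors as
conjugation by `[k, b^φ]`; the latter commutes with `[a, b^φ]` because `[a, b] ∈ A` fixes the
mixed tensor `[k, b^φ]`.
-/

namespace TensorNu

universe u

/-- The commutator `[x,y] = x⁻¹y⁻¹xy`. -/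
def comm {K : Type*} [Group K] (x y : K) : K := x⁻¹ * y⁻¹ * x * y

/-- Conjugation `x^y = y⁻¹xy`. -/
def conj {K : Type*} [Group K] (x y : K) : K := y⁻¹ * x * y

variable (G : Type u) [Group G]

/-- The defining relators of `ν(G)`, as elements of the free group on `G ⊕ G`,
where `Sum.inl` corresponds to the canonical copy of `G` and `Sum.inr` to the
isomorphic copy `G^φ` (`g ↦ g^φ`).  They comprise the multiplication tables of
`G` and of `G^φ`, together with the relations
`[g₁,g₂^φ]^{g₃} = [g₁^{g₃},(g₂^{g₃})^φ]` and `[g₁,g₂^φ]^{g₃} = [g₁,g₂^φ]^{g₃^φ}`. -/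
def nuRels : Set (FreeGroup (G ⊕ G)) :=
  {r | (∃ g h : G, r = FreeGroup.of (Sum.inl g) * FreeGroup.of (Sum.inl h) *
          (FreeGroup.of (Sum.inl (g * h)))⁻¹)
     ∨ (∃ g h : G, r = FreeGroup.of (Sum.inr g) * FreeGroup.of (Sum.inr h) *
          (FreeGroup.of (Sum.inr (g * h)))⁻¹)
     ∨ (∃ g₁ g₂ g₃ : G, r =
          conj (comm (FreeGroup.of (Sum.inl g₁)) (FreeGroup.of (Sum.inr g₂)))
              (FreeGroup.of (Sum.inl g₃)) *
            (comm (FreeGroup.of (Sum.inl (conj g₁ g₃)))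
              (FreeGroup.of (Sum.inr (conj g₂ g₃))))⁻¹)
     ∨ (∃ g₁ g₂ g₃ : G, r =
          conj (comm (FreeGroup.of (Sum.inl g₁)) (FreeGroup.of (Sum.inr g₂)))
              (FreeGroup.of (Sum.inl g₃)) *
            (conj (comm (FreeGroup.of (Sum.inl g₁)) (FreeGroup.of (Sum.inr g₂)))
              (FreeGroup.of (Sum.inr g₃)))⁻¹)}

/-- The group `ν(G)`. -/
abbrev Nu := PresentedGroup (nuRels G)

/-- The canonical image of `g ∈ G` in `ν(G)`. -/
def ι (g : G) : Nu G := PresentedGroup.of (Sum.inl g)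

/-- The canonical image `g^φ` of `g ∈ G` (via the copy `G^φ`) in `ν(G)`. -/
def ιφ (g : G) : Nu G := PresentedGroup.of (Sum.inr g)

/-- The set `T⊗(G)` of tensors `[a, b^φ]`, `a, b ∈ G`. -/
def tensorSet : Set (Nu G) := {x | ∃ a b : G, x = comm (ι G a) (ιφ G b)}

/-- The image of `G` in `ν(G)` as a subgroup. -/
def GSub : Subgroup (Nu G) := Subgroup.closure (Set.range (ι G))

/-- The image of `G^φ` in `ν(G)` as a subgroup. -/
def GφSub : Subgroup (Nu G) := Subgroup.closure (Set.range (ιφ G))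

/-- The non-abelian tensor square `[G, G^φ] ≤ ν(G)`. -/
def tensorSquare : Subgroup (Nu G) := ⁅GSub G, GφSub G⁆

/-- `[S, x]`: the subgroup generated by the commutators `[s, x]`, `s ∈ S`. -/
def commSub {K : Type*} [Group K] (S : Set K) (x : K) : Subgroup K :=
  Subgroup.closure {c | ∃ s ∈ S, c = comm s x}

end TensorNu

namespace TensorNu

/-- `ℚ/ℤ`. -/
abbrev QZ : Type := ℚ ⧸ AddSubgroup.zmultiples (1 : ℚ)

/-- The Prüfer `p`-group `C_{p^∞}`, the `p`-primary part of `ℚ/ℤ`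
(written multiplicatively). -/
abbrev Prufer (p : ℕ) [Fact p.Prime] : Type :=
  Multiplicative (AddCommGroup.primaryComponent QZ p)

/-- The cyclic group `C₂ = ⟨d⟩` of order `2`, where `d` is the inversion
automorphism `a ↦ a⁻¹` of the Prüfer `p`-group. -/
def invC2 (p : ℕ) [Fact p.Prime] : Subgroup (MulAut (Prufer p)) :=
  Subgroup.zpowers (MulEquiv.inv (Prufer p))

/-- The semidirect product `G = C_{p^∞} ⋊ C₂`, where `d` acts by inversion. -/
abbrev PruferSd (p : ℕ) [Fact p.Prime] : Type :=
  Prufer p ⋊[(invC2 p).subtype] (invC2 p)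

section GroupIdentities
variable {K : Type*} [Group K]

lemma conj_one_right (x : K) : conj x 1 = x := by
  simp [conj]

lemma conj_mul_right (x y z : K) : conj x (y * z) = conj (conj x y) z := by
  simp only [conj, mul_inv_rev, mul_assoc]

lemma comm_mul_left (x y z : K) : comm (x * y) z = conj (comm x z) y * comm y z := by
  simp only [comm, conj]; group

lemma comm_mul_right (x y z : K) : comm x (y * z) = comm x z * conj (comm x y) z := by
  simp only [comm, conj]; group

lemma conj_eq_self_of_commute {x y : K} (h : Commute x y) : conj x y = x := by
  rw [conj, mul_assoc, h.eq, inv_mul_cancel_left]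

lemma commute_of_conj_eq_self {x y : K} (h : conj x y = x) : Commute x y := by
  rw [conj, mul_assoc, inv_mul_eq_iff_eq_mul] at h
  exact h

lemma map_comm {K' : Type*} [Group K'] (f : K →* K') (x y : K) :
    f (comm x y) = comm (f x) (f y) := by
  simp [comm]

lemma map_conj {K' : Type*} [Group K'] (f : K →* K') (x y : K) :
    f (conj x y) = conj (f x) (f y) := by
  simp [conj]

end GroupIdentities

section Nu
variable {G : Type*} [Group G]

lemma mk_eq_one_of_mem_nuRels {r : FreeGroup (G ⊕ G)} (h : r ∈ nuRels G) :
    PresentedGroup.mk (nuRels G) r = 1 :=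
  (QuotientGroup.eq_one_iff r).mpr (Subgroup.subset_normalClosure h)

lemma ι_mul (g h : G) : ι G (g * h) = ι G g * ι G h := by
  have := mk_eq_one_of_mem_nuRels (Or.inl ⟨g, h, rfl⟩)
  rw [map_mul, map_mul, map_inv, mul_inv_eq_one] at this
  exact this.symm

lemma ιφ_mul (g h : G) : ιφ G (g * h) = ιφ G g * ιφ G h := by
  have := mk_eq_one_of_mem_nuRels (Or.inr (Or.inl ⟨g, h, rfl⟩))
  rw [map_mul, map_mul, map_inv, mul_inv_eq_one] at this
  exact this.symm

@[simp] lemma ι_one : ι G 1 = 1 := by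
  simpa using ι_mul (1 : G) 1

@[simp] lemma ιφ_one : ιφ G 1 = 1 := by
  simpa using ιφ_mul (1 : G) 1

def tensor (a b : G) : Nu G := comm (ι G a) (ιφ G b)

lemma tensor_one_left (b : G) : tensor 1 b = 1 := by
  simp [tensor, comm]

lemma tensor_one_right (a : G) : tensor a 1 = 1 := by
  simp [tensor, comm]

lemma conj_tensor_ι (a b g : G) :
    conj (tensor a b) (ι G g) = tensor (conj a g) (conj b g) := by
  have := mk_eq_one_of_mem_nuRels (Or.inr (Or.inr (Or.inl ⟨a, b, g, rfl⟩)))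
  simp only [map_mul, map_inv, map_conj, map_comm, mul_inv_eq_one] at this
  exact this

lemma conj_tensor_ιφ (a b g : G) : conj (tensor a b) (ιφ G g) = conj (tensor a b) (ι G g) := by
  have := mk_eq_one_of_mem_nuRels (Or.inr (Or.inr (Or.inr ⟨a, b, g, rfl⟩)))
  simp only [map_mul, map_inv, map_conj, map_comm, mul_inv_eq_one] at this
  exact this.symm

lemma tensor_mul_left (a a' b : G) :
    tensor (a * a') b = conj (tensor a b) (ι G a') * tensor a' b := by
  rw [tensor, ι_mul, comm_mul_left]; rfl

lemma tensor_mul_right (a b b' : G) :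
    tensor a (b * b') = tensor a b' * conj (tensor a b) (ι G b') := by
  rw [tensor, ιφ_mul, comm_mul_right, ← conj_tensor_ιφ]; rfl

lemma tensor_mul_left_of_tensor_eq_one {a b : G} (h : tensor a b = 1) (a' : G) :
    tensor (a * a') b = tensor a' b := by
  rw [tensor_mul_left, h, conj, mul_one, inv_mul_cancel, one_mul]

lemma tensor_mul_right_of_tensor_eq_one {a b : G} (h : tensor a b = 1) (b' : G) :
    tensor a (b * b') = tensor a b' := by
  rw [tensor_mul_right, h, conj, mul_one, inv_mul_cancel, mul_one]

lemma tensor_pow_left {a b : G} (h : Commute a b) (n : ℕ) :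
    tensor (a ^ n) b = tensor a b ^ n := by
  induction n with
  | zero => simp [tensor_one_left]
  | succ n ih =>
    rw [pow_succ, tensor_mul_left, conj_tensor_ι, conj_eq_self_of_commute (Commute.pow_left rfl n),
      conj_eq_self_of_commute h.symm, ih, pow_succ]

lemma tensor_pow_right {a b : G} (h : Commute a b) (n : ℕ) :
    tensor a (b ^ n) = tensor a b ^ n := by
  induction n with
  | zero => simp [tensor_one_right]
  | succ n ih =>
    rw [pow_succ', tensor_mul_right, conj_tensor_ι, conj_eq_self_of_commute (h.pow_right n),
      conj_eq_self_of_commute (Commute.pow_right rfl n), ih, pow_succ]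

lemma tensor_pow_left_eq_one {a b : G} (h : Commute a b) {n : ℕ} (hb : b ^ n = 1) :
    tensor (a ^ n) b = 1 := by
  rw [tensor_pow_left h, ← tensor_pow_right h, hb, tensor_one_right]

variable (G) in
def nuProj : Nu G →* G :=
  PresentedGroup.toGroup (f := Sum.elim id id) <| by
    rintro r (⟨g, h, rfl⟩ | ⟨g, h, rfl⟩ | ⟨g₁, g₂, g₃, rfl⟩ | ⟨g₁, g₂, g₃, rfl⟩) <;>
      simp only [map_mul, map_inv, FreeGroup.lift_apply_of, Sum.elim_inl, Sum.elim_inr, id_eq,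
        conj, comm] <;> group

@[simp] lemma nuProj_ι (g : G) : nuProj G (ι G g) = g := PresentedGroup.toGroup.of _

@[simp] lemma nuProj_ιφ (g : G) : nuProj G (ιφ G g) = g := PresentedGroup.toGroup.of _

lemma nuProj_tensor (a b : G) : nuProj G (tensor a b) = comm a b := by
  simp [tensor, map_comm]

theorem conj_tensor (a b : G) (x : Nu G) :
    conj (tensor a b) x = tensor (conj a (nuProj G x)) (conj b (nuProj G x)) := by
  have hx : x ∈ Subgroup.closure (Set.range (PresentedGroup.of (rels := nuRels G))) := by
    rw [PresentedGroup.closure_range_of]; trivial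
  induction hx using Subgroup.closure_induction generalizing a b with
  | mem _ hg =>
    obtain ⟨g | g, rfl⟩ := hg
    · rw [← ι, nuProj_ι]
      exact conj_tensor_ι a b g
    · rw [← ιφ, conj_tensor_ιφ, nuProj_ιφ]
      exact conj_tensor_ι a b g
  | one => simp only [map_one, conj_one_right]
  | mul x y _ _ hx hy => rw [conj_mul_right, hx, hy, map_mul, conj_mul_right, conj_mul_right]
  | inv x _ hx =>
    have h := hx (conj a (nuProj G x)⁻¹) (conj b (nuProj G x)⁻¹)
    rw [← conj_mul_right, ← conj_mul_right, inv_mul_cancel, conj_one_right, conj_one_right] at h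
    rw [map_inv, ← h, ← conj_mul_right, mul_inv_cancel, conj_one_right]

lemma conj_tensor_eq_conj_ι (a b : G) (x : Nu G) :
    conj (tensor a b) x = conj (tensor a b) (ι G (nuProj G x)) := by
  rw [conj_tensor, conj_tensor_ι]

lemma conjugatesOf_tensor_subset_range {a b : G} {H : Subgroup G}
    (hH : ∀ h ∈ H, conj (tensor a b) (ι G h) = tensor a b) :
    conjugatesOf (tensor a b) ⊆
      Set.range fun q : G ⧸ H ↦ conj (tensor a b) (ι G q.out⁻¹) := by
  intro y hy
  obtain ⟨c, rfl⟩ := isConj_iff.mp hy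
  obtain ⟨h, hh⟩ := QuotientGroup.mk_out_eq_mul H (nuProj G c)
  refine ⟨nuProj G c, ?_⟩
  dsimp only
  rw [hh, mul_inv_rev, ι_mul, conj_mul_right, hH _ (inv_mem h.2), ← map_inv,
    ← conj_tensor_eq_conj_ι, conj, inv_inv]

theorem conjugatesOf_tensor_finite_and_card_le_index (a b : G) (H : Subgroup G) [H.FiniteIndex]
    (hH : ∀ h ∈ H, conj (tensor a b) (ι G h) = tensor a b) :
    (conjugatesOf (tensor a b)).Finite ∧ Nat.card (conjugatesOf (tensor a b)) ≤ H.index := by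
  have hsub := conjugatesOf_tensor_subset_range hH
  refine ⟨(Set.finite_range _).subset hsub, ?_⟩
  calc Nat.card (conjugatesOf (tensor a b)) ≤ Nat.card (Set.range _) :=
        Nat.card_mono (Set.finite_range _) hsub
    _ ≤ Nat.card (G ⧸ H) := Finite.card_range_le _
    _ = H.index := rfl

end Nu

section SemidirectProduct
open SemidirectProduct
variable {N H : Type*} [Group N] [Group H] {φ : H →* MulAut N}

lemma inl_left_eq_of_right_eq_one {g : N ⋊[φ] H} (h : g.right = 1) : inl g.left = g := by
  ext <;> simp [h]

lemma exists_conj_inl_eq_inl_mul (g : N ⋊[φ] H) (c : N) : ∃ v, conj g (inl c) = inl v * g :=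
  ⟨(conj g (inl c) * g⁻¹).left, by
    rw [inl_left_eq_of_right_eq_one (by simp [conj]), inv_mul_cancel_right]⟩

open scoped IsMulCommutative in
lemma exists_comm_eq_inl [IsMulCommutative H] (a b : N ⋊[φ] H) : ∃ v, comm a b = inl v := by
  refine ⟨(comm a b).left, (inl_left_eq_of_right_eq_one ?_).symm⟩
  simp only [comm, SemidirectProduct.mul_right, SemidirectProduct.inv_right]
  rw [mul_comm a.right⁻¹]
  group

end SemidirectProduct

namespace Prufer
variable {p : ℕ} [Fact p.Prime]

lemma exists_pow_prime_pow_eq_one (x : Prufer p) : ∃ n, x ^ p ^ n = 1 := by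
  obtain ⟨n, hn⟩ := AddCommGroup.mem_primaryComponent.mp x.toAdd.2
  exact ⟨n, toAdd_eq_zero.mp (by rw [toAdd_pow]; exact Subtype.ext hn)⟩

lemma exists_pow_prime_pow_eq (x : Prufer p) (j : ℕ) : ∃ y : Prufer p, y ^ p ^ j = x := by
  obtain ⟨n, hn⟩ := AddCommGroup.mem_primaryComponent.mp x.toAdd.2
  obtain ⟨q, hq⟩ := QuotientAddGroup.mk_surjective (x.toAdd : QZ)
  have hp : (p : ℚ) ≠ 0 := by exact_mod_cast (Fact.out : p.Prime).ne_zero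
  set y : QZ := ↑(q / p ^ j)
  have hy : p ^ j • y = x.toAdd := by
    rw [← hq, ← QuotientAddGroup.mk_nsmul, nsmul_eq_mul, Nat.cast_pow,
      mul_div_cancel₀ _ (pow_ne_zero j hp)]
  have hy' : y ∈ AddCommGroup.primaryComponent QZ p :=
    AddCommGroup.mem_primaryComponent.mpr ⟨n + j, by rw [pow_add, mul_smul, hy, hn]⟩
  exact ⟨Multiplicative.ofAdd ⟨y, hy'⟩, Multiplicative.toAdd.injective (Subtype.ext hy)⟩

lemma exists_sq_eq (x : Prufer p) : ∃ y : Prufer p, y ^ 2 = x := by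
  rcases (Fact.out : p.Prime).eq_two_or_odd' with rfl | hp
  · simpa using exists_pow_prime_pow_eq x 1
  · have hpg : IsPGroup p (Prufer p) := exists_pow_prime_pow_eq_one
    exact (hpg.powEquiv (Nat.coprime_two_right.mpr hp)).surjective x

end Prufer

section PruferSd
open SemidirectProduct
variable {p : ℕ} [Fact p.Prime]

instance : IsMulCommutative (invC2 p) := Subgroup.zpowers_isMulCommutative _

lemma mulEquivInv_sq (A : Type*) [CommGroup A] : MulEquiv.inv A ^ 2 = 1 := by
  ext; simp [sq]

lemma eq_one_or_coe_eq_inv (e : invC2 p) :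
    e = 1 ∨ (e : MulAut (Prufer p)) = MulEquiv.inv (Prufer p) := by
  obtain ⟨k, hk⟩ := Subgroup.mem_zpowers_iff.mp e.2
  rcases Int.even_or_odd' k with ⟨m, rfl | rfl⟩
  · left
    rw [← Subtype.coe_inj, ← hk, zpow_mul, zpow_two, ← sq, mulEquivInv_sq, one_zpow]; rfl
  · right
    rw [← hk, zpow_add, zpow_mul, zpow_two, ← sq, mulEquivInv_sq, one_zpow, one_mul, zpow_one]

lemma index_ker_rightHom :
    (rightHom : PruferSd p →* invC2 p).ker.index = orderOf (MulEquiv.inv (Prufer p)) := by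
  rw [Subgroup.index_ker, MonoidHom.range_eq_top.mpr rightHom_surjective, Subgroup.card_top,
    invC2, Nat.card_zpowers]

instance : (rightHom : PruferSd p →* invC2 p).ker.FiniteIndex :=
  ⟨index_ker_rightHom.trans_ne <| (orderOf_pos_iff.mpr <|
    isOfFinOrder_iff_pow_eq_one.mpr ⟨2, two_pos, mulEquivInv_sq _⟩).ne'⟩

lemma index_ker_rightHom_le_two : (rightHom : PruferSd p →* invC2 p).ker.index ≤ 2 :=
  index_ker_rightHom.trans_le (orderOf_le_of_pow_eq_one two_pos (mulEquivInv_sq _))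

lemma comm_inl_of_right_eq_inv {b : PruferSd p}
    (hb : (b.right : MulAut (Prufer p)) = MulEquiv.inv (Prufer p)) (k : Prufer p) :
    comm (inl k) b = inl (k⁻¹ * k⁻¹) := by
  ext : 1
  · simp only [comm, mul_left, inv_left, right_inl, inv_one, Subgroup.subtype_apply,
      OneMemClass.coe_one, left_inl, MulAut.one_apply, inv_right, InvMemClass.coe_inv, hb,
      MulAut.inv_apply, MulEquiv.inv_symm, MulEquiv.inv_apply, inv_inv, mul_right, one_mul, mul_one]
    rw [mul_right_comm k⁻¹ b.left, mul_inv_cancel_right]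
  · simp [comm]

lemma tensor_inl_inl (u v : Prufer p) : tensor (inl u : PruferSd p) (inl v) = 1 := by
  obtain ⟨n, hn⟩ := Prufer.exists_pow_prime_pow_eq_one v
  obtain ⟨w, rfl⟩ := Prufer.exists_pow_prime_pow_eq u n
  rw [map_pow]
  exact tensor_pow_left_eq_one ((Commute.all w v).map inl) (by rw [← map_pow, hn, map_one])

lemma conj_tensor_inl_left (u : Prufer p) (b : PruferSd p) (c : Prufer p) :
    conj (tensor (inl u) b) (ι _ (inl c)) = tensor (inl u) b := by
  obtain ⟨v, hv⟩ := exists_conj_inl_eq_inl_mul b c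
  rw [conj_tensor_ι, hv, conj_eq_self_of_commute ((Commute.all u c).map inl),
    tensor_mul_right_of_tensor_eq_one (tensor_inl_inl u v)]

lemma conj_tensor_inl_right (a : PruferSd p) (u c : Prufer p) :
    conj (tensor a (inl u)) (ι _ (inl c)) = tensor a (inl u) := by
  obtain ⟨v, hv⟩ := exists_conj_inl_eq_inl_mul a c
  rw [conj_tensor_ι, hv, conj_eq_self_of_commute ((Commute.all u c).map inl),
    tensor_mul_left_of_tensor_eq_one (tensor_inl_inl v u)]

lemma conj_tensor_of_right_eq_inv (a : PruferSd p) {b : PruferSd p}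
    (hb : (b.right : MulAut (Prufer p)) = MulEquiv.inv (Prufer p)) (c : Prufer p) :
    conj (tensor a b) (ι _ (inl c)) = tensor a b := by
  obtain ⟨k, rfl⟩ : ∃ k, k⁻¹ * k⁻¹ = c := by
    obtain ⟨y, hy⟩ := Prufer.exists_sq_eq c
    exact ⟨y⁻¹, by rw [inv_inv, ← sq, hy]⟩
  obtain ⟨v, hv⟩ := exists_comm_eq_inl a b
  have hcomm : Commute (tensor (inl k) b) (tensor a b) := commute_of_conj_eq_self <| by
    rw [conj_tensor_eq_conj_ι, nuProj_tensor, hv, conj_tensor_inl_left]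
  rw [← comm_inl_of_right_eq_inv hb, ← nuProj_tensor, ← conj_tensor_eq_conj_ι,
    conj_eq_self_of_commute hcomm.symm]

lemma conj_tensor_ι_inl (a b : PruferSd p) (c : Prufer p) :
    conj (tensor a b) (ι _ (inl c)) = tensor a b := by
  rcases eq_one_or_coe_eq_inv b.right with hb | hb
  · rw [← inl_left_eq_of_right_eq_one hb]
    exact conj_tensor_inl_right a _ c
  · exact conj_tensor_of_right_eq_inv a hb c

end PruferSd

/-- Every tensor of `G = C_{p^∞} ⋊ C₂` has at most `4` conjugates in `ν(G)`. -/
theorem prufer_tensor_conj_le_four (p : ℕ) [Fact p.Prime] :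
    ∀ x ∈ tensorSet (PruferSd p),
      (conjugatesOf x).Finite ∧ Nat.card (conjugatesOf x) ≤ 4 := by
  rintro _ ⟨a, b, rfl⟩
  have hA : ∀ h ∈ (SemidirectProduct.rightHom : PruferSd p →* invC2 p).ker,
      conj (tensor a b) (ι _ h) = tensor a b := fun h hh ↦ by
    rw [← inl_left_eq_of_right_eq_one hh]
    exact conj_tensor_ι_inl a b h.left
  obtain ⟨hfin, hcard⟩ := conjugatesOf_tensor_finite_and_card_le_index a b _ hA
  exact ⟨hfin, hcard.trans (index_ker_rightHom_le_two.trans (by norm_num))⟩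

end TensorNu
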